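/- Consider the linearized ADMM setting with variables x^k, x^{k+1} ∈ ℝ^p, y^{k−1}, y^k, y^{k+1} ∈ ℝ^q, γ^{k−1}, γ^k, γ^{k+1} ∈ ℝ^n, matrices A ∈ ℝ^{n×p}, B ∈ ℝ^{n×q} where B has full column rank and Im(A) ⊆ Im(B), functions g : ℝ^p × ℝ^q → ℝ (L_g-Lipschitz differentiable), f : ℝ^p → ℝ, h : ℝ^q → ℝ (L_h-Lipschitz differentiable), and constants L_y > 0, β > 0. Suppose ∇h̄^{k−1}(y^k) = 0 and ∇h̄^k(y^{k+1}) = 0 (as holds when y^k, y^{k+1} are the y-update minimizers), γ^k = γ^{k−1} + β(Ax^k + By^k), and γ^{k+1} = γ^k + β(Ax^{k+1} + By^{k+1}). Then L_β(x^{k+1}, y^{k+1}, γ^{k+1}) − L_β(x^{k+1}, y^{k+1}, γ^k) = (1/β)‖γ^{k+1} − γ^k‖² ≤ C2‖x^{k+1} − x^k‖² + C3‖y^{k+1} − y^k‖² + C4‖y^k − y^{k−1}‖², where L_w = L_g + L_h, C2 = 3L_w²/(β λ_{BᵀB}), C3 = 3L_y²/(β λ_{BᵀB}), C4 = 3(L_w²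 + L_y²)/(β λ_{BᵀB}), and λ_{BᵀB} is the smallest eigenvalue of BᵀB. -/

import Mathlib

open Matrix Filter
open scoped RealInnerProductSpace

noncomputable section

abbrev Vec (m : ℕ) := EuclideanSpace ℝ (Fin m)

def mv {m l : ℕ} (M : Matrix (Fin m) (Fin l) ℝ) (v : Vec l) : Vec m := WithLp.toLp 2 (M.mulVec v)

def gradx {p q : ℕ} (g : Vec p → Vec q → ℝ) (x : Vec p) (y : Vec q) : Vec p :=
  gradient (fun x' => g x' y) x

def grady {p q : ℕ} (g : Vec p → Vec q → ℝ) (x : Vec p) (y : Vec q) : Vec q :=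
  gradient (g x) y

def LipschitzDifferentiable {m : ℕ} (h : Vec m → ℝ) (L : ℝ) : Prop :=
  Differentiable ℝ h ∧ ∀ y y' : Vec m, ‖gradient h y - gradient h y'‖ ≤ L * ‖y - y'‖

def LipschitzDifferentiable2 {p q : ℕ} (g : Vec p → Vec q → ℝ) (L : ℝ) : Prop :=
  (∀ y, Differentiable ℝ fun x => g x y) ∧ (∀ x, Differentiable ℝ (g x)) ∧
    ∀ x x' : Vec p, ∀ y y' : Vec q,
      Real.sqrt (‖gradx g x y - gradx g x' y'‖ ^ 2 + ‖grady g x y - grady g x' y'‖ ^ 2) ≤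
        L * Real.sqrt (‖x - x'‖ ^ 2 + ‖y - y'‖ ^ 2)

def Lagr {p q n : ℕ} (β : ℝ) (g : Vec p → Vec q → ℝ) (f : Vec p → ℝ) (h : Vec q → ℝ)
    (A : Matrix (Fin n) (Fin p) ℝ) (B : Matrix (Fin n) (Fin q) ℝ)
    (x : Vec p) (y : Vec q) (γ : Vec n) : ℝ :=
  g x y + f x + h y + ⟪γ, mv A x + mv B y⟫ + β / 2 * ‖mv A x + mv B y‖ ^ 2

def fbar {p q n : ℕ} (f : Vec p → ℝ) (g : Vec p → Vec q → ℝ)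
    (A : Matrix (Fin n) (Fin p) ℝ) (B : Matrix (Fin n) (Fin q) ℝ) (β Lx : ℝ)
    (xk : Vec p) (yk : Vec q) (γk : Vec n) (x : Vec p) : ℝ :=
  f x + ⟪γk, mv A x⟫ + Lx / 2 * ‖x - xk‖ ^ 2 +
    ⟪x - xk, gradx g xk yk + β • mv Aᵀ (mv A xk + mv B yk)⟫

def hbar {p q n : ℕ} (g : Vec p → Vec q → ℝ) (h : Vec q → ℝ)
    (A : Matrix (Fin n) (Fin p) ℝ) (B : Matrix (Fin n) (Fin q) ℝ) (β Ly : ℝ)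
    (xk1 : Vec p) (yk : Vec q) (γk : Vec n) (y : Vec q) : ℝ :=
  ⟪γk, mv B y⟫ + Ly / 2 * ‖y - yk‖ ^ 2 + β / 2 * ‖mv A xk1 + mv B y‖ ^ 2 +
    ⟪y - yk, grady g xk1 yk + gradient h yk⟫

def IsSmallestEigenvalue {m : ℕ} (M : Matrix (Fin m) (Fin m) ℝ) (lam : ℝ) : Prop :=
  (∃ v : Fin m → ℝ, v ≠ 0 ∧ M.mulVec v = lam • v) ∧
    ∀ μ : ℝ, (∃ v : Fin m → ℝ, v ≠ 0 ∧ M.mulVec v = μ • v) → lam ≤ μ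

def IsLargestEigenvalue {m : ℕ} (M : Matrix (Fin m) (Fin m) ℝ) (lam : ℝ) : Prop :=
  (∃ v : Fin m → ℝ, v ≠ 0 ∧ M.mulVec v = lam • v) ∧
    ∀ μ : ℝ, (∃ v : Fin m → ℝ, v ≠ 0 ∧ M.mulVec v = μ • v) → μ ≤ lam

def RegularSubgradientAt {m : ℕ} (f : Vec m → ℝ) (x₀ v : Vec m) : Prop :=
  ∀ ε > 0, ∀ᶠ x in nhds x₀, f x₀ + ⟪v, x - x₀⟫ - ε * ‖x - x₀‖ ≤ f x

/-!
The identity is immediate from `γ^{k+1} - γ^k = β (A x^{k+1} + B y^{k+1})`. For the bound,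
stationarity of the y-update reads
`Bᵀ γ^{k+1} = -(L_y (y^{k+1} - y^k) + ∇_y g(x^{k+1}, y^k) + ∇h(y^k))`; subtracting the same
identity one step earlier writes `Bᵀ (γ^{k+1} - γ^k)` as a combination of y-steps and gradient
differences, whose squared norm is at most three times the sum of the squares of the Lipschitz
bounds. Because `Im A ⊆ Im B`, the dual increment lies in `Im B`, where
`‖Bᵀ u‖² ≥ λ_{BᵀB} ‖u‖²`, and `λ_{BᵀB} > 0` since `B` has full column rank.
-/

lemma mv_eq_toEuclideanLin {a b : ℕ} (M : Matrix (Fin a) (Fin b) ℝ) :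
    mv M = Matrix.toEuclideanLin M := rfl

lemma mv_add {a b : ℕ} (M : Matrix (Fin a) (Fin b) ℝ) (u v : Vec b) :
    mv M (u + v) = mv M u + mv M v := map_add (Matrix.toEuclideanLin M) u v

lemma mv_sub {a b : ℕ} (M : Matrix (Fin a) (Fin b) ℝ) (u v : Vec b) :
    mv M (u - v) = mv M u - mv M v := map_sub (Matrix.toEuclideanLin M) u v

lemma mv_smul {a b : ℕ} (M : Matrix (Fin a) (Fin b) ℝ) (c : ℝ) (u : Vec b) :
    mv M (c • u) = c • mv M u := map_smul (Matrix.toEuclideanLin M) c u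

lemma mv_mul {a b c : ℕ} (M : Matrix (Fin a) (Fin b) ℝ) (N : Matrix (Fin b) (Fin c) ℝ)
    (v : Vec c) : mv (M * N) v = mv M (mv N v) := by
  simp [mv_eq_toEuclideanLin]

lemma inner_mv {a b : ℕ} (M : Matrix (Fin a) (Fin b) ℝ) (u : Vec a) (w : Vec b) :
    ⟪u, mv M w⟫ = ⟪mv Mᵀ u, w⟫ := by
  rw [mv_eq_toEuclideanLin, mv_eq_toEuclideanLin, ← conjTranspose_eq_transpose_of_trivial,
    toEuclideanLin_conjTranspose_eq_adjoint, LinearMap.adjoint_inner_left]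

lemma inner_mv_transpose_mul_self {a b : ℕ} (B : Matrix (Fin a) (Fin b) ℝ) (z : Vec b) :
    ⟪z, mv (Bᵀ * B) z⟫ = ‖mv B z‖ ^ 2 := by
  rw [mv_mul, real_inner_comm, ← inner_mv, real_inner_self_eq_norm_sq]

lemma Matrix.mulVec_injective_of_rank_eq {m n K : Type*} [Field K] [Fintype n]
    {B : Matrix m n K} (hB : B.rank = Fintype.card n) : Function.Injective B.mulVec := by
  rw [mulVec_injective_iff, linearIndependent_iff_card_eq_finrank_span, ← hB,
    rank_eq_finrank_span_cols]
  rfl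

lemma IsSmallestEigenvalue.mul_norm_sq_le_inner {m : ℕ} {M : Matrix (Fin m) (Fin m) ℝ}
    (hM : M.IsHermitian) {lam : ℝ} (hs : IsSmallestEigenvalue M lam) (z : Vec m) :
    lam * ‖z‖ ^ 2 ≤ ⟪z, mv M z⟫ := by
  set b := hM.eigenvectorBasis
  have hle (i : Fin m) : lam ≤ hM.eigenvalues i := by
    refine hs.2 _ ⟨b i, fun h0 => ?_, hM.mulVec_eigenvectorBasis i⟩
    simpa [show b i = 0 from WithLp.ofLp_injective 2 h0] using b.orthonormal.1 i
  have heig (i : Fin m) : ⟪b i, mv M z⟫ = hM.eigenvalues i * ⟪b i, z⟫ := by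
    rw [mv_eq_toEuclideanLin, ← (isSymmetric_toEuclideanLin_iff.mpr hM) (b i) z,
      ← mv_eq_toEuclideanLin, mv, hM.mulVec_eigenvectorBasis i]
    exact real_inner_smul_left _ _ _
  calc lam * ‖z‖ ^ 2 = ∑ i, lam * (⟪z, b i⟫ * ⟪b i, z⟫) := by
        rw [← real_inner_self_eq_norm_sq, ← b.sum_inner_mul_inner, Finset.mul_sum]
    _ ≤ ∑ i, hM.eigenvalues i * (⟪z, b i⟫ * ⟪b i, z⟫) := by
        gcongr with i
        · rw [real_inner_comm]; exact mul_self_nonneg _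
        · exact hle i
    _ = ⟪z, mv M z⟫ := by
        rw [← b.sum_inner_mul_inner]
        exact Finset.sum_congr rfl fun i _ => by rw [heig]; ring

lemma IsSmallestEigenvalue.pos_of_mulVec_injective {q n : ℕ} {B : Matrix (Fin n) (Fin q) ℝ}
    (hB : Function.Injective B.mulVec) {lam : ℝ} (hs : IsSmallestEigenvalue (Bᵀ * B) lam) :
    0 < lam := by
  obtain ⟨v, hv0, hv⟩ := hs.1
  set z : Vec q := WithLp.toLp 2 v
  have hz : z ≠ 0 := fun h0 => hv0 (congrArg WithLp.ofLp h0)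
  have hBz : mv B z ≠ 0 := fun h0 => hv0 (hB (by simpa [mv, z] using congrArg WithLp.ofLp h0))
  have hquad : lam * ‖z‖ ^ 2 = ‖mv B z‖ ^ 2 := by
    rw [← inner_mv_transpose_mul_self,
      show mv (Bᵀ * B) z = lam • z from congrArg (WithLp.toLp 2) hv, real_inner_smul_right,
      real_inner_self_eq_norm_sq]
  have : 0 < lam * ‖z‖ ^ 2 := hquad ▸ by positivity
  exact pos_of_mul_pos_left this (by positivity)

lemma IsSmallestEigenvalue.mul_norm_sq_le_norm_sq_mv_transpose {q n : ℕ}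
    {B : Matrix (Fin n) (Fin q) ℝ} {lam : ℝ} (hs : IsSmallestEigenvalue (Bᵀ * B) lam)
    {u : Vec n} (hu : u ∈ Set.range (mv B)) : lam * ‖u‖ ^ 2 ≤ ‖mv Bᵀ u‖ ^ 2 := by
  obtain ⟨z, rfl⟩ := hu
  have hray : lam * ‖z‖ ^ 2 ≤ ‖mv B z‖ ^ 2 := by
    simpa [inner_mv_transpose_mul_self] using
      hs.mul_norm_sq_le_inner (by simpa using isHermitian_conjTranspose_mul_self B) z
  have hcs : ‖mv B z‖ ^ 2 ≤ ‖z‖ * ‖mv Bᵀ (mv B z)‖ := by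
    rw [← inner_mv_transpose_mul_self, mv_mul]
    exact real_inner_le_norm _ _
  have key : ‖z‖ ^ 2 * (lam * ‖mv B z‖ ^ 2) ≤ ‖z‖ ^ 2 * ‖mv Bᵀ (mv B z)‖ ^ 2 := calc
    _ = (lam * ‖z‖ ^ 2) * ‖mv B z‖ ^ 2 := by ring
    _ ≤ ‖mv B z‖ ^ 2 * ‖mv B z‖ ^ 2 := by gcongr
    _ = (‖mv B z‖ ^ 2) ^ 2 := by ring
    _ ≤ (‖z‖ * ‖mv Bᵀ (mv B z)‖) ^ 2 := by gcongr
    _ = _ := by ring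
  rcases eq_or_ne z 0 with rfl | hz
  · simp [mv_eq_toEuclideanLin]
  · exact le_of_mul_le_mul_left key (by positivity)

lemma hasFDerivAt_mv {a b : ℕ} (M : Matrix (Fin a) (Fin b) ℝ) (y : Vec b) :
    HasFDerivAt (mv M) (LinearMap.toContinuousLinearMap (Matrix.toEuclideanLin M)) y :=
  (LinearMap.toContinuousLinearMap (Matrix.toEuclideanLin M)).hasFDerivAt

lemma hasGradientAt_hbar {p q n : ℕ} (g : Vec p → Vec q → ℝ) (h : Vec q → ℝ)
    (A : Matrix (Fin n) (Fin p) ℝ) (B : Matrix (Fin n) (Fin q) ℝ) (β Ly : ℝ)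
    (x₁ : Vec p) (y₀ : Vec q) (γ : Vec n) (y : Vec q) :
    HasGradientAt (hbar g h A B β Ly x₁ y₀ γ)
      (mv Bᵀ γ + Ly • (y - y₀) + β • mv Bᵀ (mv A x₁ + mv B y)
        + (grady g x₁ y₀ + gradient h y₀)) y := by
  set d := grady g x₁ y₀ + gradient h y₀
  set c := mv A x₁
  have hB := (hasFDerivAt_mv B y).const_add c
  have hshift := (hasFDerivAt_id (𝕜 := ℝ) y).sub_const y₀
  have H := ((((hasFDerivAt_mv B y).inner ℝ (hasFDerivAt_const γ y)).add
    ((hshift.inner ℝ hshift).const_mul (Ly / 2))).add ((hB.inner ℝ hB).const_mul (β / 2))).add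
      (hshift.inner ℝ (hasFDerivAt_const d y))
  rw [hasGradientAt_iff_hasFDerivAt]
  refine (H.congr_of_eventuallyEq (.of_forall fun y' => ?_)).congr_fderiv ?_
  · simp only [hbar, Pi.add_apply, id, real_inner_self_eq_norm_sq, real_inner_comm γ, c, d]
  · ext w
    simp only [id_eq, _root_.add_apply, ContinuousLinearMap.comp_apply,
      ContinuousLinearMap.prod_apply, LinearMap.coe_toContinuousLinearMap', ← mv_eq_toEuclideanLin,
      _root_.zero_apply, fderivInnerCLM_apply, inner_zero_right, real_inner_comm γ, zero_add,
      _root_.smul_apply, ContinuousLinearMap.id_apply, inner_sub_left, real_inner_comm (y - y₀) w,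
      smul_eq_mul, inner_add_left, inner_add_right, real_inner_comm c, real_inner_comm (mv B y),
      real_inner_comm d w, mv_add, smul_add, map_add, map_smul, map_sub,
      InnerProductSpace.toDual_apply_apply, ← inner_mv, _root_.sub_apply, add_left_inj]
    ring

lemma LipschitzDifferentiable.nonneg {m : ℕ} {h : Vec m → ℝ} {L : ℝ}
    (hh : LipschitzDifferentiable h L) {y : Vec m} (hy : y ≠ 0) : 0 ≤ L := by
  have := (norm_nonneg _).trans (hh.2 y 0)
  rw [sub_zero] at this
  exact nonneg_of_mul_nonneg_left this (norm_pos_iff.mpr hy)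

lemma LipschitzDifferentiable2.norm_grady_sub_le {p q : ℕ} {g : Vec p → Vec q → ℝ} {L : ℝ}
    (hg : LipschitzDifferentiable2 g L) (x x' : Vec p) (y y' : Vec q) :
    ‖grady g x y - grady g x' y'‖ ≤ L * √(‖x - x'‖ ^ 2 + ‖y - y'‖ ^ 2) :=
  (Real.le_sqrt_of_sq_le (le_add_of_nonneg_left (sq_nonneg _))).trans (hg.2.2 x x' y y')

lemma norm_sq_grad_sub_le {p q : ℕ} {g : Vec p → Vec q → ℝ} {h : Vec q → ℝ} {Lg Lh : ℝ}
    (hg : LipschitzDifferentiable2 g Lg) (hh : LipschitzDifferentiable h Lh) (hLh : 0 ≤ Lh)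
    (x x' : Vec p) (y y' : Vec q) :
    ‖(grady g x y - grady g x' y') + (gradient h y - gradient h y')‖ ^ 2 ≤
      (Lg + Lh) ^ 2 * (‖x - x'‖ ^ 2 + ‖y - y'‖ ^ 2) := by
  have hy : ‖y - y'‖ ≤ √(‖x - x'‖ ^ 2 + ‖y - y'‖ ^ 2) :=
    Real.le_sqrt_of_sq_le (le_add_of_nonneg_left (sq_nonneg _))
  have hsum : ‖(grady g x y - grady g x' y') + (gradient h y - gradient h y')‖ ≤
      (Lg + Lh) * √(‖x - x'‖ ^ 2 + ‖y - y'‖ ^ 2) := calc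
    _ ≤ ‖grady g x y - grady g x' y'‖ + ‖gradient h y - gradient h y'‖ := norm_add_le _ _
    _ ≤ Lg * √(‖x - x'‖ ^ 2 + ‖y - y'‖ ^ 2) + Lh * √(‖x - x'‖ ^ 2 + ‖y - y'‖ ^ 2) :=
        add_le_add (hg.norm_grady_sub_le x x' y y') ((hh.2 y y').trans (by gcongr))
    _ = _ := by ring
  calc _ ≤ ((Lg + Lh) * √(‖x - x'‖ ^ 2 + ‖y - y'‖ ^ 2)) ^ 2 := by gcongr
    _ = _ := by rw [mul_pow, Real.sq_sqrt (by positivity)]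

lemma norm_sq_smul_sub_smul_sub_le {E : Type*} [SeminormedAddCommGroup E] [NormedSpace ℝ E]
    (r : ℝ) (a b c : E) :
    ‖r • a - r • b - c‖ ^ 2 ≤ 3 * (r ^ 2 * ‖a‖ ^ 2 + r ^ 2 * ‖b‖ ^ 2 + ‖c‖ ^ 2) := by
  have h : ‖r • a - r • b - c‖ ≤ |r| * ‖a‖ + |r| * ‖b‖ + ‖c‖ := by
    grw [norm_sub_le, norm_sub_le, norm_smul, norm_smul, Real.norm_eq_abs]
  calc _ ≤ (|r| * ‖a‖ + |r| * ‖b‖ + ‖c‖) ^ 2 := by gcongr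
    _ ≤ 3 * ((|r| * ‖a‖) ^ 2 + (|r| * ‖b‖) ^ 2 + ‖c‖ ^ 2) := by
        nlinarith [sq_nonneg (|r| * ‖a‖ - |r| * ‖b‖), sq_nonneg (|r| * ‖a‖ - ‖c‖),
          sq_nonneg (|r| * ‖b‖ - ‖c‖)]
    _ = _ := by simp only [mul_pow, sq_abs]

lemma real_inner_smul_self_eq_one_div_mul_norm_sq {E : Type*} [NormedAddCommGroup E]
    [InnerProductSpace ℝ E] (β : ℝ) (r : E) : ⟪β • r, r⟫ = 1 / β * ‖β • r‖ ^ 2 := by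
  rw [real_inner_smul_left, real_inner_self_eq_norm_sq, norm_smul, mul_pow, Real.norm_eq_abs,
    sq_abs]
  rcases eq_or_ne β 0 with rfl | hβ
  · simp
  · field_simp

lemma Lagr_sub_Lagr {p q n : ℕ} (β : ℝ) (g : Vec p → Vec q → ℝ) (f : Vec p → ℝ) (h : Vec q → ℝ)
    (A : Matrix (Fin n) (Fin p) ℝ) (B : Matrix (Fin n) (Fin q) ℝ) (x : Vec p) (y : Vec q)
    (γ γ' : Vec n) :
    Lagr β g f h A B x y γ' - Lagr β g f h A B x y γ = ⟪γ' - γ, mv A x + mv B y⟫ := by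
  simp only [Lagr, inner_sub_left]
  ring

lemma mv_transpose_dual_update_of_gradient_hbar_eq_zero {p q n : ℕ} {g : Vec p → Vec q → ℝ}
    {h : Vec q → ℝ} {A : Matrix (Fin n) (Fin p) ℝ} {B : Matrix (Fin n) (Fin q) ℝ} {β Ly : ℝ}
    {x₁ : Vec p} {y₀ y : Vec q} {γ : Vec n}
    (hstat : gradient (hbar g h A B β Ly x₁ y₀ γ) y = 0) :
    mv Bᵀ (γ + β • (mv A x₁ + mv B y)) = -(Ly • (y - y₀) + (grady g x₁ y₀ + gradient h y₀)) := by
  have hgrad := (hasGradientAt_hbar g h A B β Ly x₁ y₀ γ y).gradient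
  rw [hstat] at hgrad
  rw [mv_add, mv_smul]
  linear_combination (norm := module) -hgrad

lemma mv_transpose_dual_sub {p q n : ℕ} {g : Vec p → Vec q → ℝ} {h : Vec q → ℝ}
    {A : Matrix (Fin n) (Fin p) ℝ} {B : Matrix (Fin n) (Fin q) ℝ} {β Ly : ℝ} {xk xk1 : Vec p}
    {ykm1 yk yk1 : Vec q} {γkm1 γk γk1 : Vec n}
    (hstatk : gradient (hbar g h A B β Ly xk ykm1 γkm1) yk = 0)
    (hstatk1 : gradient (hbar g h A B β Ly xk1 yk γk) yk1 = 0)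
    (hγk : γk = γkm1 + β • (mv A xk + mv B yk))
    (hγk1 : γk1 = γk + β • (mv A xk1 + mv B yk1)) :
    mv Bᵀ (γk1 - γk) = Ly • (yk - ykm1) - Ly • (yk1 - yk) -
      ((grady g xk1 yk - grady g xk ykm1) + (gradient h yk - gradient h ykm1)) := by
  rw [mv_sub, hγk1, mv_transpose_dual_update_of_gradient_hbar_eq_zero hstatk1, hγk,
    mv_transpose_dual_update_of_gradient_hbar_eq_zero hstatk]
  module

theorem statement6_general {p q n : ℕ}
    (A : Matrix (Fin n) (Fin p) ℝ) (B : Matrix (Fin n) (Fin q) ℝ)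
    (hrank : B.rank = q) (himg : Set.range (mv A) ⊆ Set.range (mv B))
    (g : Vec p → Vec q → ℝ) (f : Vec p → ℝ) (h : Vec q → ℝ)
    (Lg Lh : ℝ) (hg : LipschitzDifferentiable2 g Lg) (hh : LipschitzDifferentiable h Lh)
    (Ly β lamB : ℝ) (hβ : 0 < β)
    (hlamB : IsSmallestEigenvalue (Bᵀ * B) lamB)
    (xk xk1 : Vec p) (ykm1 yk yk1 : Vec q) (γkm1 γk γk1 : Vec n)
    (hstatk : gradient (hbar g h A B β Ly xk ykm1 γkm1) yk = 0)
    (hstatk1 : gradient (hbar g h A B β Ly xk1 yk γk) yk1 = 0)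
    (hγk : γk = γkm1 + β • (mv A xk + mv B yk))
    (hγk1 : γk1 = γk + β • (mv A xk1 + mv B yk1)) :
    Lagr β g f h A B xk1 yk1 γk1 - Lagr β g f h A B xk1 yk1 γk =
      1 / β * ‖γk1 - γk‖ ^ 2 ∧
    1 / β * ‖γk1 - γk‖ ^ 2 ≤
      3 * (Lg + Lh) ^ 2 / (β * lamB) * ‖xk1 - xk‖ ^ 2 +
      3 * Ly ^ 2 / (β * lamB) * ‖yk1 - yk‖ ^ 2 +
      3 * ((Lg + Lh) ^ 2 + Ly ^ 2) / (β * lamB) * ‖yk - ykm1‖ ^ 2 := by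
  have hδ : γk1 - γk = β • (mv A xk1 + mv B yk1) := by rw [hγk1, add_sub_cancel_left]
  refine ⟨by rw [Lagr_sub_Lagr, hδ, real_inner_smul_self_eq_one_div_mul_norm_sq], ?_⟩
  have hlam : 0 < lamB :=
    hlamB.pos_of_mulVec_injective (mulVec_injective_of_rank_eq (by simpa using hrank))
  have hLh : 0 ≤ Lh := by
    obtain ⟨v, hv, -⟩ := hlamB.1
    exact hh.nonneg (y := WithLp.toLp 2 v) fun h0 => hv (congrArg WithLp.ofLp h0)
  have hδB : γk1 - γk ∈ Set.range (mv B) := by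
    obtain ⟨z, hz⟩ := himg ⟨xk1, rfl⟩
    exact ⟨β • (z + yk1), by rw [hδ, mv_smul, mv_add, hz]⟩
  have hgrad := norm_sq_grad_sub_le hg hh hLh xk1 xk yk ykm1
  have key : lamB * ‖γk1 - γk‖ ^ 2 ≤ 3 * ((Lg + Lh) ^ 2 * ‖xk1 - xk‖ ^ 2 +
      Ly ^ 2 * ‖yk1 - yk‖ ^ 2 + ((Lg + Lh) ^ 2 + Ly ^ 2) * ‖yk - ykm1‖ ^ 2) := calc
    _ ≤ ‖mv Bᵀ (γk1 - γk)‖ ^ 2 := hlamB.mul_norm_sq_le_norm_sq_mv_transpose hδB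
    _ ≤ 3 * (Ly ^ 2 * ‖yk - ykm1‖ ^ 2 + Ly ^ 2 * ‖yk1 - yk‖ ^ 2 +
        ‖(grady g xk1 yk - grady g xk ykm1) + (gradient h yk - gradient h ykm1)‖ ^ 2) := by
      rw [mv_transpose_dual_sub hstatk hstatk1 hγk hγk1]
      exact norm_sq_smul_sub_smul_sub_le Ly _ _ _
    _ ≤ _ := by linarith
  calc 1 / β * ‖γk1 - γk‖ ^ 2 = lamB * ‖γk1 - γk‖ ^ 2 / (β * lamB) := by field_simp
    _ ≤ 3 * ((Lg + Lh) ^ 2 * ‖xk1 - xk‖ ^ 2 + Ly ^ 2 * ‖yk1 - yk‖ ^ 2 +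
        ((Lg + Lh) ^ 2 + Ly ^ 2) * ‖yk - ykm1‖ ^ 2) / (β * lamB) := by gcongr
    _ = _ := by ring

theorem statement6 {p q n : ℕ}
    (A : Matrix (Fin n) (Fin p) ℝ) (B : Matrix (Fin n) (Fin q) ℝ)
    (hrank : B.rank = q) (himg : Set.range (mv A) ⊆ Set.range (mv B))
    (g : Vec p → Vec q → ℝ) (f : Vec p → ℝ) (h : Vec q → ℝ)
    (Lg Lh : ℝ) (hg : LipschitzDifferentiable2 g Lg) (hh : LipschitzDifferentiable h Lh)
    (Ly β lamB : ℝ) (hLy : 0 < Ly) (hβ : 0 < β)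
    (hlamB : IsSmallestEigenvalue (Bᵀ * B) lamB)
    (xk xk1 : Vec p) (ykm1 yk yk1 : Vec q) (γkm1 γk γk1 : Vec n)
    (hstatk : gradient (hbar g h A B β Ly xk ykm1 γkm1) yk = 0)
    (hstatk1 : gradient (hbar g h A B β Ly xk1 yk γk) yk1 = 0)
    (hγk : γk = γkm1 + β • (mv A xk + mv B yk))
    (hγk1 : γk1 = γk + β • (mv A xk1 + mv B yk1)) :
    Lagr β g f h A B xk1 yk1 γk1 - Lagr β g f h A B xk1 yk1 γk =
      1 / β * ‖γk1 - γk‖ ^ 2 ∧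
    1 / β * ‖γk1 - γk‖ ^ 2 ≤
      3 * (Lg + Lh) ^ 2 / (β * lamB) * ‖xk1 - xk‖ ^ 2 +
      3 * Ly ^ 2 / (β * lamB) * ‖yk1 - yk‖ ^ 2 +
      3 * ((Lg + Lh) ^ 2 + Ly ^ 2) / (β * lamB) * ‖yk - ykm1‖ ^ 2 :=
  statement6_general A B hrank himg g f h Lg Lh hg hh Ly β lamB hβ hlamB xk xk1 ykm1 yk yk1 γkm1 γk
    γk1 hstatk hstatk1 hγk hγk1
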